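/- Let w be a finitely supported permutation of the positive integers. The map sending a pair (a, α), where a = (a₁,...,a_p) is a reduced word for w and α = (α₁,...,α_p) is a compatible sequence for a, to the set D(a,α) = {(α_k, a_k − α_k + 1) : 1 ≤ k ≤ p} is a bijection from the set of such pairs {(a, α) : a ∈ R(w), α ∈ C(a)} onto the set RC(w) of rc-graphs for w; moreover, for each pair, reading the cells of D(a,α) in order of increasing row index and, within each row, decreasing column index recovers the word a, and each cell (i,j) contributes the factor x_i = x_{α_k}, so that x^{D(a,α)} = x_{α₁}···x_{α_p}. -/

import Mathlib

open MvPolynomial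

/-- The length ℓ(w) of a (finitely supported) permutation of the positive integers:
the number of inversions. -/
noncomputable def plength (w : Equiv.Perm ℕ+) : ℕ :=
  Set.ncard {p : ℕ+ × ℕ+ | p.1 < p.2 ∧ w p.2 < w p.1}

/-- The simple reflection sᵢ = t_{i,i+1}. -/
def sP (i : ℕ+) : Equiv.Perm ℕ+ := Equiv.swap i (i + 1)

/-- A reduced word for w: a list of positive letters whose simple reflections multiply
(in order) to w, of length ℓ(w). -/
def IsReducedWordP (w : Equiv.Perm ℕ+) (L : List ℕ+) : Prop :=
  (L.map sP).prod = w ∧ L.length = plength w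

/-- The reading order on cells: increasing row index and, within a row, decreasing
column index. -/
def cellOrd (p q : ℕ+ × ℕ+) : Prop := p.1 < q.1 ∨ (p.1 = q.1 ∧ q.2 ≤ p.2)

instance : DecidableRel cellOrd := fun p q => by unfold cellOrd; infer_instance

instance : IsTrans (ℕ+ × ℕ+) cellOrd := ⟨by
  rintro a b c (h | ⟨h1, h2⟩) (h' | ⟨h1', h2'⟩)
  · exact Or.inl (h.trans h')
  · exact Or.inl (lt_of_lt_of_le h (le_of_eq h1'))
  · exact Or.inl (lt_of_le_of_lt (le_of_eq h1) h')
  · exact Or.inr ⟨h1.trans h1', h2'.trans h2⟩⟩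

instance : IsAntisymm (ℕ+ × ℕ+) cellOrd := ⟨by
  rintro a b (h | ⟨h1, h2⟩) (h' | ⟨h1', h2'⟩)
  · exact absurd h' (not_lt.mpr h.le)
  · exact absurd h (by rw [h1']; exact lt_irrefl _)
  · exact absurd h' (by rw [h1]; exact lt_irrefl _)
  · exact Prod.ext h1 (le_antisymm h2' h2)⟩

instance : IsTotal (ℕ+ × ℕ+) cellOrd := ⟨fun a b => by
  rcases lt_trichotomy a.1 b.1 with h | h | h
  · exact Or.inl (Or.inl h)
  · rcases le_total b.2 a.2 with h2 | h2
    · exact Or.inl (Or.inr ⟨h, h2⟩)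
    · exact Or.inr (Or.inr ⟨h.symm, h2⟩)
  · exact Or.inr (Or.inl h)⟩

/-- The reading word of a finite set of cells: read the cells in order of increasing
row index and, within each row, decreasing column index; the cell (i,j) gives the
letter i + j − 1. -/
def rcWord (D : Finset (ℕ+ × ℕ+)) : List ℕ+ :=
  (D.sort cellOrd).map fun p => p.1 + p.2 - 1

/-- D is an rc-graph for w if its reading word is a reduced word for w. -/
def IsRCGraph (w : Equiv.Perm ℕ+) (D : Finset (ℕ+ × ℕ+)) : Prop :=
  IsReducedWordP w (rcWord D)

/-- The set RC(w) of rc-graphs for w. -/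
def RCset (w : Equiv.Perm ℕ+) : Set (Finset (ℕ+ × ℕ+)) := {D | IsRCGraph w D}

/-- The monomial x^D = ∏_{(i,j) ∈ D} xᵢ. -/
noncomputable def xD (D : Finset (ℕ+ × ℕ+)) : MvPolynomial ℕ+ ℤ :=
  ∏ p ∈ D, X p.1

/-- α is a compatible sequence for the word a: both have the same length, α is a
weakly increasing sequence of positive integers, αₖ ≤ aₖ for all k, and
αₖ < αₖ₊₁ whenever aₖ < aₖ₊₁. -/
def IsCompatibleP (a α : List ℕ+) : Prop :=
  α.length = a.length ∧
  (∀ k, k + 1 < α.length → α.getD k 1 ≤ α.getD (k + 1) 1) ∧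
  (∀ k, k < α.length → α.getD k 1 ≤ a.getD k 1) ∧
  (∀ k, k + 1 < α.length → a.getD k 1 < a.getD (k + 1) 1 → α.getD k 1 < α.getD (k + 1) 1)

/-- The set of cells D(a,α) = {(αₖ, aₖ − αₖ + 1) : 1 ≤ k ≤ p} associated to a pair
(a, α) of a word and a compatible sequence. -/
def cellsOfPair (p : List ℕ+ × List ℕ+) : Finset (ℕ+ × ℕ+) :=
  ((p.2.zip p.1).map fun q =>
    (q.1, (⟨(q.2 : ℕ) - (q.1 : ℕ) + 1, Nat.succ_pos _⟩ : ℕ+))).toFinset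

/-! A cell `(i, j)` is determined by its row `i` and its letter `i + j - 1`, so `D(a, α)` is the
set of cells whose (row, letter) pairs are `(αₖ, aₖ)`. A reduced word has no two equal adjacent
letters (they would cancel, and a word of length `p` has product of length at most `p`). Given
that, compatibility of `α` says exactly that these cells are listed strictly increasingly in
reading order, so reading `D(a, α)` gives back `a` and `α`; conversely the rows and letters of an
rc-graph, read in order, form a compatible pair whose cells are the rc-graph. -/

def inversionSet (u : Equiv.Perm ℕ+) : Set (ℕ+ × ℕ+) := {p | p.1 < p.2 ∧ u p.2 < u p.1}

lemma eq_of_sP_inverts {i x y : ℕ+} (hxy : x < y) (h : sP i y < sP i x) :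
    x = i ∧ y = i + 1 := by
  simp only [sP, Equiv.swap_apply_def] at h
  split_ifs at h <;>
    simp only [← PNat.coe_inj, ← PNat.coe_lt_coe, PNat.add_coe, PNat.one_coe] at * <;> omega

lemma inversionSet_sP_mul_subset (i : ℕ+) (u : Equiv.Perm ℕ+) :
    inversionSet (sP i * u) ⊆ insert (u⁻¹ i, u⁻¹ (i + 1)) (inversionSet u) := by
  rintro ⟨x, y⟩ ⟨hxy, hinv⟩
  rcases lt_or_gt_of_ne (u.injective.ne hxy.ne') with hlt | hgt
  · exact Or.inr ⟨hxy, hlt⟩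
  · obtain ⟨hx, hy⟩ := eq_of_sP_inverts hgt hinv
    left
    rw [← hy, ← hx]
    simp

lemma encard_inversionSet_prod_le (L : List ℕ+) :
    (inversionSet (L.map sP).prod).encard ≤ L.length := by
  induction L with
  | nil =>
    have : inversionSet 1 = ∅ := Set.eq_empty_of_forall_notMem fun p hp => lt_asymm hp.1 hp.2
    simp [this]
  | cons i L ih =>
    calc (inversionSet (sP i * (L.map sP).prod)).encard
        ≤ (insert _ (inversionSet (L.map sP).prod)).encard :=
          Set.encard_le_encard (inversionSet_sP_mul_subset i _)
      _ ≤ (inversionSet (L.map sP).prod).encard + 1 := Set.encard_insert_le _ _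
      _ ≤ (i :: L).length := by push_cast [List.length_cons]; gcongr

lemma plength_prod_le (L : List ℕ+) : plength (L.map sP).prod ≤ L.length :=
  ENat.toNat_le_of_le_natCast (encard_inversionSet_prod_le L)

lemma IsReducedWordP.isChain_ne {w : Equiv.Perm ℕ+} {L : List ℕ+} (h : IsReducedWordP w L) :
    L.IsChain (· ≠ ·) := by
  refine List.isChain_iff_forall_rel_of_append_cons_cons.mpr ?_
  rintro i j l₁ l₂ rfl rfl
  have hcancel : ((l₁ ++ i :: i :: l₂).map sP).prod = ((l₁ ++ l₂).map sP).prod := by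
    simp [← mul_assoc, sP]
  have := plength_prod_le (l₁ ++ l₂)
  rw [← hcancel, h.1, ← h.2] at this
  simp at this

def cellLetter (u : ℕ+ × ℕ+) : ℕ+ := u.1 + u.2 - 1

def cellOf (q : ℕ+ × ℕ+) : ℕ+ × ℕ+ := (q.1, ⟨(q.2 : ℕ) - (q.1 : ℕ) + 1, Nat.succ_pos _⟩)

lemma cellOf_fst (q : ℕ+ × ℕ+) : (cellOf q).1 = q.1 := rfl

lemma cellOf_snd_coe (q : ℕ+ × ℕ+) : ((cellOf q).2 : ℕ) = q.2 - q.1 + 1 := rfl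

def rowLetter (u : ℕ+ × ℕ+) : ℕ+ × ℕ+ := (u.1, cellLetter u)

-- The condition linking consecutive (row, letter) pairs `(αₖ, aₖ)`, `(αₖ₊₁, aₖ₊₁)`.
def CompatibleStep (p q : ℕ+ × ℕ+) : Prop := p.1 ≤ q.1 ∧ (p.2 < q.2 → p.1 < q.1)

lemma cellLetter_coe (u : ℕ+ × ℕ+) : (cellLetter u : ℕ) = u.1 + u.2 - 1 := by
  have : 1 < u.1 + u.2 := by
    rw [← PNat.coe_lt_coe, PNat.add_coe, PNat.one_coe]
    have := u.1.pos
    have := u.2.pos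
    omega
  rw [cellLetter, PNat.sub_coe, if_pos this]
  rfl

lemma fst_le_cellLetter (u : ℕ+ × ℕ+) : u.1 ≤ cellLetter u := by
  rw [← PNat.coe_le_coe, cellLetter_coe]
  have := u.2.pos
  omega

lemma cellOf_rowLetter (u : ℕ+ × ℕ+) : cellOf (rowLetter u) = u := by
  refine Prod.ext rfl (PNat.coe_injective ?_)
  show (cellLetter u : ℕ) - u.1 + 1 = u.2
  rw [cellLetter_coe]
  have := u.2.pos
  omega

lemma rowLetter_cellOf {q : ℕ+ × ℕ+} (hq : q.1 ≤ q.2) : rowLetter (cellOf q) = q := by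
  refine Prod.ext rfl (PNat.coe_injective ?_)
  show (cellLetter (cellOf q) : ℕ) = q.2
  rw [cellLetter_coe, ← PNat.coe_le_coe] at *
  show (q.1 : ℕ) + ((q.2 : ℕ) - q.1 + 1) - 1 = q.2
  omega

lemma compatibleStep_rowLetter {u v : ℕ+ × ℕ+} (h : cellOrd u v) :
    CompatibleStep (rowLetter u) (rowLetter v) := by
  simp only [cellOrd, CompatibleStep, rowLetter, ← PNat.coe_lt_coe, ← PNat.coe_le_coe,
    ← PNat.coe_inj, cellLetter_coe] at *
  omega

def cellLT (u v : ℕ+ × ℕ+) : Prop := cellOrd u v ∧ u ≠ v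

instance : IsTrans (ℕ+ × ℕ+) cellLT :=
  ⟨fun _ _ _ ⟨huv, hne⟩ ⟨hvw, _⟩ =>
    ⟨_root_.trans huv hvw, fun h => hne (antisymm huv (h ▸ hvw))⟩⟩

lemma cellLT_cellOf {p q : ℕ+ × ℕ+} (hp : p.1 ≤ p.2) (hq : q.1 ≤ q.2) (h : CompatibleStep p q)
    (hne : p.2 ≠ q.2) : cellLT (cellOf p) (cellOf q) := by
  simp only [cellLT, cellOrd, CompatibleStep, ne_eq, Prod.ext_iff, ← PNat.coe_lt_coe,
    ← PNat.coe_le_coe, ← PNat.coe_inj, cellOf_fst, cellOf_snd_coe] at *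
  omega

lemma isCompatibleP_iff {a α : List ℕ+} : IsCompatibleP a α ↔
    α.length = a.length ∧ (∀ q ∈ α.zip a, q.1 ≤ q.2) ∧ (α.zip a).IsChain CompatibleStep := by
  rw [IsCompatibleP, List.isChain_iff_getElem, List.forall_mem_iff_getElem]
  refine and_congr_right fun hlen => ?_
  simp +contextual (disch := omega) only [List.getD_eq_getElem, List.length_zip, hlen, min_self,
    List.getElem_zip, CompatibleStep, forall_and]
  exact and_left_comm

lemma cellsOfPair_eq (p : List ℕ+ × List ℕ+) :
    cellsOfPair p = ((p.2.zip p.1).map cellOf).toFinset := rfl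

lemma sort_cellsOfPair {a α : List ℕ+} (hc : IsCompatibleP a α) (ha : a.IsChain (· ≠ ·)) :
    (cellsOfPair (a, α)).sort cellOrd = (α.zip a).map cellOf := by
  obtain ⟨hlen, hle, hstep⟩ := isCompatibleP_iff.mp hc
  have hne : (α.zip a).IsChain fun p q => p.2 ≠ q.2 := by
    rwa [← List.isChain_map, List.map_snd_zip hlen.ge]
  have hlt : ((α.zip a).map cellOf).Pairwise cellLT := by
    rw [← List.isChain_iff_pairwise, List.isChain_map]
    refine List.IsChain.imp_of_mem_imp (R := fun p q => CompatibleStep p q ∧ p.2 ≠ q.2)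
      (fun p q hp hq h => cellLT_cellOf (hle p hp) (hle q hq) h.1 h.2) ?_
    exact List.isChain_iff_getElem.mpr fun i hi => ⟨hstep.getElem i hi, hne.getElem i hi⟩
  exact (List.toFinset_sort cellOrd (hlt.imp (·.2))).mpr (hlt.imp (·.1))

lemma map_rowLetter_sort_cellsOfPair {a α : List ℕ+} (hc : IsCompatibleP a α)
    (ha : a.IsChain (· ≠ ·)) :
    ((cellsOfPair (a, α)).sort cellOrd).map rowLetter = α.zip a := by
  rw [sort_cellsOfPair hc ha, List.map_map]
  conv_rhs => rw [← List.map_id (α.zip a)]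
  exact List.map_congr_left fun q hq => rowLetter_cellOf ((isCompatibleP_iff.mp hc).2.1 q hq)

lemma rcWord_cellsOfPair {a α : List ℕ+} (hc : IsCompatibleP a α) (ha : a.IsChain (· ≠ ·)) :
    rcWord (cellsOfPair (a, α)) = a := by
  have := congrArg (List.map Prod.snd) (map_rowLetter_sort_cellsOfPair hc ha)
  rwa [List.map_map, List.map_snd_zip hc.1.ge] at this

lemma map_fst_sort_cellsOfPair {a α : List ℕ+} (hc : IsCompatibleP a α)
    (ha : a.IsChain (· ≠ ·)) : ((cellsOfPair (a, α)).sort cellOrd).map Prod.fst = α := by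
  have := congrArg (List.map Prod.fst) (map_rowLetter_sort_cellsOfPair hc ha)
  rwa [List.map_map, List.map_fst_zip hc.1.le] at this

lemma xD_eq_prod_sort (D : Finset (ℕ+ × ℕ+)) :
    xD D = (((D.sort cellOrd).map Prod.fst).map X).prod := by
  rw [xD, List.map_map, ← List.prod_toFinset _ (D.sort_nodup cellOrd), Finset.sort_toFinset]
  rfl

def pairOfCells (D : Finset (ℕ+ × ℕ+)) : List ℕ+ × List ℕ+ :=
  (rcWord D, (D.sort cellOrd).map Prod.fst)

lemma pairOfCells_cellsOfPair {a α : List ℕ+} (hc : IsCompatibleP a α)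
    (ha : a.IsChain (· ≠ ·)) :
    pairOfCells (cellsOfPair (a, α)) = (a, α) :=
  Prod.ext (rcWord_cellsOfPair hc ha) (map_fst_sort_cellsOfPair hc ha)

lemma zip_pairOfCells (D : Finset (ℕ+ × ℕ+)) :
    (pairOfCells D).2.zip (pairOfCells D).1 = (D.sort cellOrd).map rowLetter :=
  List.zip_map' ..

lemma isCompatibleP_pairOfCells (D : Finset (ℕ+ × ℕ+)) :
    IsCompatibleP (pairOfCells D).1 (pairOfCells D).2 := by
  rw [isCompatibleP_iff, zip_pairOfCells]
  refine ⟨by simp [pairOfCells, rcWord], ?_, ?_⟩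
  · simp only [List.mem_map]
    rintro _ ⟨u, -, rfl⟩
    exact fst_le_cellLetter u
  · rw [List.isChain_map]
    exact (D.pairwise_sort cellOrd).isChain.imp fun _ _ => compatibleStep_rowLetter

lemma cellsOfPair_pairOfCells (D : Finset (ℕ+ × ℕ+)) : cellsOfPair (pairOfCells D) = D := by
  rw [cellsOfPair_eq, zip_pairOfCells, List.map_map]
  simp [Function.comp_def, cellOf_rowLetter]

theorem rcgraphs_biject_compatible_pairs_general (w : Equiv.Perm ℕ+) :
    Set.BijOn cellsOfPair
      {p : List ℕ+ × List ℕ+ | IsReducedWordP w p.1 ∧ IsCompatibleP p.1 p.2}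
      (RCset w) ∧
    ∀ p : List ℕ+ × List ℕ+, IsReducedWordP w p.1 → IsCompatibleP p.1 p.2 →
      rcWord (cellsOfPair p) = p.1 ∧
      xD (cellsOfPair p) = (p.2.map X).prod := by
  refine ⟨Set.InvOn.bijOn (f' := pairOfCells)
    ⟨?_, fun D _ => cellsOfPair_pairOfCells D⟩ ?_ ?_, ?_⟩
  · rintro ⟨a, α⟩ ⟨hr, hc⟩
    exact pairOfCells_cellsOfPair hc hr.isChain_ne
  · rintro ⟨a, α⟩ ⟨hr, hc⟩
    show IsReducedWordP w (rcWord _)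
    rwa [rcWord_cellsOfPair hc hr.isChain_ne]
  · exact fun D hD => ⟨hD, isCompatibleP_pairOfCells D⟩
  · rintro ⟨a, α⟩ hr hc
    refine ⟨rcWord_cellsOfPair hc hr.isChain_ne, ?_⟩
    rw [xD_eq_prod_sort, map_fst_sort_cellsOfPair hc hr.isChain_ne]

theorem rcgraphs_biject_compatible_pairs (w : Equiv.Perm ℕ+) (hw : {x | w x ≠ x}.Finite) :
    Set.BijOn cellsOfPair
      {p : List ℕ+ × List ℕ+ | IsReducedWordP w p.1 ∧ IsCompatibleP p.1 p.2}
      (RCset w) ∧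
    ∀ p : List ℕ+ × List ℕ+, IsReducedWordP w p.1 → IsCompatibleP p.1 p.2 →
      rcWord (cellsOfPair p) = p.1 ∧
      xD (cellsOfPair p) = (p.2.map X).prod :=
  rcgraphs_biject_compatible_pairs_general w
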